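/- arXiv:1312.7698 — 6 statements merged into one kernel-verified Lean document; each statement's English description precedes it below -/
import Mathlib

section
/- Every finite-dimensional Banach space $X$ has the Bishop-Phelps-Bollobás property for numerical radius: for every $0 < \varepsilon < 1$ there exists $\eta > 0$ such that whenever $T \in \mathcal{L}(X)$ with $v(T) = 1$ and $(x, x^*) \in \Pi(X)$ satisfy $|x^*(Tx)| > 1 - \eta$, there exist $S \in \mathcal{L}(X)$ and $(y, y^*) \in \Pi(X)$ with $v(S) = |y^*(Sy)| = 1$, $\|T - S\| < \varepsilon$, $\|x - y\| < \varepsilon$, and $\|x^* - y^*\| < \varepsilon$. -/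
open NormedSpace

/-- The numerical radius of a bounded linear operator `T` on a Banach space `X`:
`v(T) = sup {|x*(Tx)| : (x, x*) ∈ Π(X)}`. -/
noncomputable def nuRad {X : Type*} [NormedAddCommGroup X] [NormedSpace ℝ X]
    (T : X →L[ℝ] X) : ℝ :=
  sSup {r : ℝ | ∃ (x : X) (f : StrongDual ℝ X), ‖x‖ = 1 ∧ ‖f‖ = 1 ∧ f x = 1 ∧ r = |f (T x)|}

section Aux

variable {X : Type*} [NormedAddCommGroup X] [NormedSpace ℝ X]

lemma nuRad_mem_le {T : X →L[ℝ] X} {r : ℝ}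
    (hr : r ∈ {r : ℝ | ∃ (x : X) (f : StrongDual ℝ X), ‖x‖ = 1 ∧ ‖f‖ = 1 ∧ f x = 1 ∧ r = |f (T x)|}) :
    r ≤ ‖T‖ := by
  obtain ⟨x, f, hx, hf, -, rfl⟩ := hr
  calc |f (T x)| = ‖f (T x)‖ := (Real.norm_eq_abs _).symm
    _ ≤ ‖f‖ * ‖T x‖ := f.le_opNorm _
    _ ≤ ‖f‖ * (‖T‖ * ‖x‖) := by
        gcongr
        exact T.le_opNorm _
    _ = ‖T‖ := by rw [hf, hx]; ring

lemma nuRad_bddAbove (T : X →L[ℝ] X) :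
    BddAbove {r : ℝ | ∃ (x : X) (f : StrongDual ℝ X), ‖x‖ = 1 ∧ ‖f‖ = 1 ∧ f x = 1 ∧ r = |f (T x)|} :=
  ⟨‖T‖, fun _ hr => nuRad_mem_le hr⟩

lemma abs_le_nuRad {T : X →L[ℝ] X} {x : X} {f : StrongDual ℝ X}
    (hx : ‖x‖ = 1) (hf : ‖f‖ = 1) (hfx : f x = 1) : |f (T x)| ≤ nuRad T :=
  le_csSup (nuRad_bddAbove T) ⟨x, f, hx, hf, hfx, rfl⟩

lemma nuRad_nonneg (T : X →L[ℝ] X) : 0 ≤ nuRad T := by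
  apply Real.sSup_nonneg
  rintro r ⟨x, f, hx, hf, hfx, rfl⟩
  positivity

lemma nuRad_le {T : X →L[ℝ] X} {a : ℝ} (ha : 0 ≤ a)
    (h : ∀ (x : X) (f : StrongDual ℝ X), ‖x‖ = 1 → ‖f‖ = 1 → f x = 1 → |f (T x)| ≤ a) :
    nuRad T ≤ a := by
  apply Real.sSup_le _ ha
  rintro r ⟨x, f, hx, hf, hfx, rfl⟩
  exact h x f hx hf hfx

lemma nuRad_le_add (T S : X →L[ℝ] X) : nuRad T ≤ nuRad S + ‖T - S‖ := by
  apply nuRad_le (add_nonneg (nuRad_nonneg S) (norm_nonneg _))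
  intro x f hx hf hfx
  have h1 : |f (S x)| ≤ nuRad S := abs_le_nuRad hx hf hfx
  have h2 : |f (T x) - f (S x)| ≤ ‖T - S‖ := by
    have : f (T x) - f (S x) = f ((T - S) x) := by simp
    rw [this]
    calc |f ((T - S) x)| = ‖f ((T - S) x)‖ := (Real.norm_eq_abs _).symm
      _ ≤ ‖f‖ * ‖(T - S) x‖ := f.le_opNorm _
      _ ≤ ‖f‖ * (‖T - S‖ * ‖x‖) := by gcongr; exact (T - S).le_opNorm _
      _ = ‖T - S‖ := by rw [hf, hx]; ring
  calc |f (T x)| ≤ |f (S x)| + |f (T x) - f (S x)| := by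
        have := abs_add_le (f (S x)) (f (T x) - f (S x)); simpa using this
    _ ≤ nuRad S + ‖T - S‖ := add_le_add h1 h2

lemma nuRad_lipschitz : LipschitzWith 1 (nuRad (X := X)) := by
  apply LipschitzWith.of_dist_le_mul
  intro T S
  rw [Real.dist_eq, dist_eq_norm, NNReal.coe_one, one_mul, abs_sub_le_iff]
  constructor
  · have := nuRad_le_add T S; linarith
  · have := nuRad_le_add S T
    rw [show ‖S - T‖ = ‖T - S‖ from norm_sub_rev S T] at this
    linarith

lemma nuRad_congr {T S : X →L[ℝ] X}
    (h : ∀ (x : X) (f : StrongDual ℝ X), ‖x‖ = 1 → ‖f‖ = 1 → f x = 1 → f (T x) = f (S x)) :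
    nuRad T = nuRad S := by
  unfold nuRad
  congr 1
  ext r
  constructor
  · rintro ⟨x, f, hx, hf, hfx, rfl⟩
    exact ⟨x, f, hx, hf, hfx, by rw [h x f hx hf hfx]⟩
  · rintro ⟨x, f, hx, hf, hfx, rfl⟩
    exact ⟨x, f, hx, hf, hfx, by rw [h x f hx hf hfx]⟩

lemma nuRad_smul_le (c : ℝ) (T : X →L[ℝ] X) : nuRad (c • T) ≤ |c| * nuRad T := by
  apply nuRad_le (mul_nonneg (abs_nonneg c) (nuRad_nonneg T))
  intro x f hx hf hfx
  have : f ((c • T) x) = c * f (T x) := by simp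
  rw [this, abs_mul]
  exact mul_le_mul_of_nonneg_left (abs_le_nuRad hx hf hfx) (abs_nonneg c)

/-- The kernel of the numerical radius seminorm, as a submodule. -/
def kerNu (X : Type*) [NormedAddCommGroup X] [NormedSpace ℝ X] :
    Submodule ℝ (X →L[ℝ] X) where
  carrier := {A | ∀ (x : X) (f : StrongDual ℝ X), ‖x‖ = 1 → ‖f‖ = 1 → f x = 1 → f (A x) = 0}
  add_mem' := by
    intro a b ha hb x f hx hf hfx
    have : f ((a + b) x) = f (a x) + f (b x) := by simp
    rw [this, ha x f hx hf hfx, hb x f hx hf hfx, add_zero]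
  zero_mem' := by intro x f _ _ _; simp
  smul_mem' := by
    intro c a ha x f hx hf hfx
    have : f ((c • a) x) = c * f (a x) := by simp
    rw [this, ha x f hx hf hfx, mul_zero]

lemma mem_kerNu_of_nuRad_eq_zero {A : X →L[ℝ] X} (h : nuRad A = 0) : A ∈ kerNu X := by
  intro x f hx hf hfx
  have h1 : |f (A x)| ≤ 0 := h ▸ abs_le_nuRad hx hf hfx
  exact abs_eq_zero.mp (le_antisymm h1 (abs_nonneg _))

end Aux

set_option maxHeartbeats 1600000 in
/-- Every finite-dimensional Banach space has the Bishop-Phelps-Bollobás property for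
numerical radius. -/
theorem stmt1 (X : Type*) [NormedAddCommGroup X] [NormedSpace ℝ X]
    [FiniteDimensional ℝ X] :
    ∀ ε : ℝ, 0 < ε → ε < 1 → ∃ η : ℝ, 0 < η ∧
      ∀ (T : X →L[ℝ] X) (x : X) (f : StrongDual ℝ X),
        nuRad T = 1 → ‖x‖ = 1 → ‖f‖ = 1 → f x = 1 → 1 - η < |f (T x)| →
        ∃ (S : X →L[ℝ] X) (y : X) (g : StrongDual ℝ X),
          ‖y‖ = 1 ∧ ‖g‖ = 1 ∧ g y = 1 ∧ nuRad S = 1 ∧ |g (S y)| = 1 ∧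
          ‖T - S‖ < ε ∧ ‖x - y‖ < ε ∧ ‖f - g‖ < ε := by
  intro ε hε hε1
  by_contra hcon
  push_neg at hcon
  -- a complement W of the kernel of the numerical radius seminorm
  obtain ⟨W, hW⟩ := Submodule.exists_isCompl (kerNu X)
  -- on W, the norm is controlled by nuRad
  have hWpos : ∀ w ∈ W, w ≠ 0 → 0 < nuRad w := by
    intro w hw hw0
    rcases lt_or_eq_of_le (nuRad_nonneg w) with h | h
    · exact h
    · exfalso
      have : w ∈ kerNu X := mem_kerNu_of_nuRad_eq_zero h.symm
      have : w ∈ kerNu X ⊓ W := ⟨this, hw⟩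
      rw [hW.inf_eq_bot] at this
      exact hw0 this
  obtain ⟨C, hC⟩ : ∃ C : ℝ, ∀ w ∈ W, ‖w‖ ≤ C * nuRad w := by
    by_cases hne : ∃ w₀ ∈ W, w₀ ≠ (0 : X →L[ℝ] X)
    · obtain ⟨w₀, hw₀W, hw₀⟩ := hne
      -- the unit sphere of W is compact and nonempty
      have hsph : (Metric.sphere (0 : W) 1).Nonempty := by
        refine ⟨⟨‖w₀‖⁻¹ • w₀, W.smul_mem _ hw₀W⟩, ?_⟩
        have hn : ‖(‖w₀‖⁻¹ • w₀ : X →L[ℝ] X)‖ = 1 := by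
          rw [norm_smul (‖w₀‖⁻¹) w₀, norm_inv, norm_norm,
            inv_mul_cancel₀ (norm_ne_zero_iff.mpr hw₀)]
        exact mem_sphere_zero_iff_norm.mpr hn
      have hcomp : IsCompact (Metric.sphere (0 : W) 1) := isCompact_sphere 0 1
      have hcont : ContinuousOn (fun w : W => nuRad (w : X →L[ℝ] X))
          (Metric.sphere (0 : W) 1) :=
        (nuRad_lipschitz.continuous.comp continuous_subtype_val).continuousOn
      obtain ⟨u, hu_mem, hu_min⟩ := hcomp.exists_isMinOn hsph hcont
      have hu1 : ‖(u : X →L[ℝ] X)‖ = 1 := mem_sphere_zero_iff_norm.mp hu_mem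
      have hune : (u : X →L[ℝ] X) ≠ 0 := by
        intro h; rw [h] at hu1; simp at hu1
      set m := nuRad (u : X →L[ℝ] X) with hm
      have hm_pos : 0 < m := hWpos u u.2 hune
      refine ⟨m⁻¹, fun w hw => ?_⟩
      by_cases hw0 : w = 0
      · rw [hw0, norm_zero]
        exact mul_nonneg (inv_nonneg.mpr hm_pos.le) (nuRad_nonneg 0)
      · have hwn : ‖w‖ ≠ 0 := norm_ne_zero_iff.mpr hw0
        have hmem : (⟨‖w‖⁻¹ • w, W.smul_mem _ hw⟩ : W) ∈ Metric.sphere (0 : W) 1 := by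
          have hn : ‖(‖w‖⁻¹ • w : X →L[ℝ] X)‖ = 1 := by
            rw [norm_smul (‖w‖⁻¹) w, norm_inv, norm_norm, inv_mul_cancel₀ hwn]
          exact mem_sphere_zero_iff_norm.mpr hn
        have h1 : m ≤ nuRad (‖w‖⁻¹ • w) := hu_min hmem
        have h2 : nuRad (‖w‖⁻¹ • w) ≤ ‖w‖⁻¹ * nuRad w := by
          have := nuRad_smul_le (‖w‖⁻¹) w
          rwa [abs_of_nonneg (by positivity)] at this
        have h3 : m ≤ ‖w‖⁻¹ * nuRad w := h1.trans h2
        have h4 : ‖w‖ * m ≤ nuRad w := by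
          have h5 := mul_le_mul_of_nonneg_left h3 (norm_nonneg w)
          rwa [← mul_assoc, mul_inv_cancel₀ hwn, one_mul] at h5
        rw [le_inv_mul_iff₀ hm_pos, mul_comm]
        exact h4
    · push_neg at hne
      refine ⟨1, fun w hw => ?_⟩
      rw [hne w hw, norm_zero, one_mul]
      exact nuRad_nonneg 0
  -- choose a violating triple for each η = 1/(n+1)
  have hchoice : ∀ n : ℕ, ∃ (T : X →L[ℝ] X) (x : X) (f : StrongDual ℝ X),
      nuRad T = 1 ∧ ‖x‖ = 1 ∧ ‖f‖ = 1 ∧ f x = 1 ∧ 1 - (1 : ℝ)/(n+1) < |f (T x)| ∧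
      ∀ (S : X →L[ℝ] X) (y : X) (g : StrongDual ℝ X),
        ‖y‖ = 1 → ‖g‖ = 1 → g y = 1 → nuRad S = 1 → |g (S y)| = 1 →
        ‖T - S‖ < ε → ‖x - y‖ < ε → ε ≤ ‖f - g‖ :=
    fun n => hcon (1/(n+1)) (by positivity)
  choose T x f hT hx hf hfx hTx hbad using hchoice
  -- decompose T n = kernel part + W part
  have hdecomp : ∀ n : ℕ, ∃ A ∈ kerNu X, ∃ w ∈ W, A + w = T n := fun n =>
    by
      obtain ⟨a, b, ha, hb, hab⟩ := Submodule.codisjoint_iff_exists_add_eq.mp hW.codisjoint (T n)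
      exact ⟨a, ha, b, hb, hab⟩
  choose A hA w hw hAw using hdecomp
  -- the W part agrees with T on Π(X)
  have hagree : ∀ n (z : X) (h : StrongDual ℝ X), ‖z‖ = 1 → ‖h‖ = 1 → h z = 1 →
      h (T n z) = h (w n z) := by
    intro n z h hz hh hhz
    have := hA n z h hz hh hhz
    have he : T n z = A n z + w n z := by rw [← hAw n]; simp
    rw [he, map_add, this, zero_add]
  have hnu_w : ∀ n, nuRad (w n) = 1 := by
    intro n
    rw [← hT n]
    exact nuRad_congr fun z h hz hh hhz => (hagree n z h hz hh hhz).symm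
  have hwC : ∀ n, w n ∈ Metric.closedBall (0 : X →L[ℝ] X) C := by
    intro n
    rw [Metric.mem_closedBall, dist_zero_right]
    have := hC (w n) (hw n)
    rw [hnu_w n, mul_one] at this
    exact this
  -- compactness: extract a convergent subsequence of (w n, x n, f n)
  set K : Set ((X →L[ℝ] X) × X × StrongDual ℝ X) :=
    Metric.closedBall (0 : X →L[ℝ] X) C ×ˢ (Metric.sphere (0 : X) 1 ×ˢ Metric.sphere (0 : StrongDual ℝ X) 1)
  have hK : IsCompact K :=
    (isCompact_closedBall _ _).prod ((isCompact_sphere _ _).prod (isCompact_sphere _ _))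
  have hmemK : ∀ n, (w n, x n, f n) ∈ K := by
    intro n
    refine ⟨hwC n, ?_, ?_⟩
    · simpa [mem_sphere_zero_iff_norm] using hx n
    · simpa [mem_sphere_zero_iff_norm] using hf n
  obtain ⟨p, hpK, φ, hφ, hconv⟩ := hK.tendsto_subseq hmemK
  obtain ⟨Tlim, y, g⟩ := p
  obtain ⟨hTlimK, hyK, hgK⟩ := hpK
  have hy1 : ‖y‖ = 1 := mem_sphere_zero_iff_norm.mp hyK
  have hg1 : ‖g‖ = 1 := mem_sphere_zero_iff_norm.mp hgK
  -- component-wise convergence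
  have hconvW : Filter.Tendsto (fun n => w (φ n)) Filter.atTop (nhds Tlim) :=
    (continuous_fst.tendsto _).comp hconv
  have hconvX : Filter.Tendsto (fun n => x (φ n)) Filter.atTop (nhds y) :=
    ((continuous_fst.comp continuous_snd).tendsto _).comp hconv
  have hconvF : Filter.Tendsto (fun n => f (φ n)) Filter.atTop (nhds g) :=
    ((continuous_snd.comp continuous_snd).tendsto _).comp hconv
  -- continuity of evaluation maps
  have happly : Continuous (fun p : StrongDual ℝ X × X => p.1 p.2) :=
    isBoundedBilinearMap_apply.continuous
  have happly2 : Continuous (fun p : (X →L[ℝ] X) × X => p.1 p.2) :=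
    isBoundedBilinearMap_apply.continuous
  -- g y = 1
  have hgy : g y = 1 := by
    have h1 : Filter.Tendsto (fun n => (f (φ n)) (x (φ n))) Filter.atTop (nhds (g y)) :=
      (happly.tendsto (g, y)).comp (hconvF.prodMk_nhds hconvX)
    have h2 : ∀ n, (f (φ n)) (x (φ n)) = 1 := fun n => hfx (φ n)
    have h1' : Filter.Tendsto (fun _ : ℕ => (1 : ℝ)) Filter.atTop (nhds (g y)) :=
      Filter.Tendsto.congr h2 h1
    exact tendsto_nhds_unique h1' tendsto_const_nhds
  -- nuRad Tlim = 1
  have hnuTlim : nuRad Tlim = 1 := by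
    have h1 : Filter.Tendsto (fun n => nuRad (w (φ n))) Filter.atTop (nhds (nuRad Tlim)) :=
      (nuRad_lipschitz.continuous.tendsto Tlim).comp hconvW
    have h1' : Filter.Tendsto (fun _ : ℕ => (1 : ℝ)) Filter.atTop (nhds (nuRad Tlim)) :=
      Filter.Tendsto.congr (fun n => hnu_w (φ n)) h1
    exact tendsto_nhds_unique h1' tendsto_const_nhds
  -- |g (Tlim y)| = 1
  have hattain : |g (Tlim y)| = 1 := by
    have h1 : Filter.Tendsto (fun n => |(f (φ n)) (w (φ n) (x (φ n)))|) Filter.atTop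
        (nhds (|g (Tlim y)|)) := by
      have hev : Filter.Tendsto (fun n => (f (φ n)) (w (φ n) (x (φ n)))) Filter.atTop
          (nhds (g (Tlim y))) := by
        have hWx : Filter.Tendsto (fun n => w (φ n) (x (φ n))) Filter.atTop (nhds (Tlim y)) :=
          (happly2.tendsto (Tlim, y)).comp (hconvW.prodMk_nhds hconvX)
        exact (happly.tendsto (g, Tlim y)).comp (hconvF.prodMk_nhds hWx)
      exact (continuous_abs.tendsto _).comp hev
    have heq : ∀ n, |(f (φ n)) (w (φ n) (x (φ n)))| = |(f (φ n)) (T (φ n) (x (φ n)))| := by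
      intro n
      rw [hagree (φ n) (x (φ n)) (f (φ n)) (hx _) (hf _) (hfx _)]
    have hub : ∀ n, |(f (φ n)) (T (φ n) (x (φ n)))| ≤ 1 := by
      intro n
      rw [← hT (φ n)]
      exact abs_le_nuRad (hx _) (hf _) (hfx _)
    have hlb : ∀ n : ℕ, 1 - (1:ℝ)/(φ n + 1) ≤ |(f (φ n)) (T (φ n) (x (φ n)))| :=
      fun n => le_of_lt (hTx (φ n))
    have h2 : Filter.Tendsto (fun n => |(f (φ n)) (T (φ n) (x (φ n)))|) Filter.atTop
        (nhds 1) := by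
      apply tendsto_of_tendsto_of_tendsto_of_le_of_le (g := fun n : ℕ => 1 - (1:ℝ)/(φ n + 1))
        (h := fun _ : ℕ => (1:ℝ)) _ tendsto_const_nhds hlb hub
      have hφtop : Filter.Tendsto φ Filter.atTop Filter.atTop := hφ.tendsto_atTop
      have : Filter.Tendsto (fun n : ℕ => 1 - (1:ℝ)/(n + 1)) Filter.atTop (nhds 1) := by
        have h0 : Filter.Tendsto (fun n : ℕ => (1:ℝ)/(n + 1)) Filter.atTop (nhds 0) :=
          tendsto_one_div_add_atTop_nhds_zero_nat
        have h0' := Filter.Tendsto.const_sub (1:ℝ) h0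
        simpa using h0'
      exact this.comp hφtop
    have h1' : Filter.Tendsto (fun n => |(f (φ n)) (T (φ n) (x (φ n)))|) Filter.atTop
        (nhds (|g (Tlim y)|)) := Filter.Tendsto.congr heq h1
    exact tendsto_nhds_unique h1' h2
  -- pick n large enough
  have hev1 : ∀ᶠ n in Filter.atTop, ‖w (φ n) - Tlim‖ < ε := by
    have := Metric.tendsto_atTop.mp hconvW ε hε
    obtain ⟨N, hN⟩ := this
    refine Filter.eventually_atTop.mpr ⟨N, fun n hn => ?_⟩
    have := hN n hn
    rwa [dist_eq_norm] at this
  have hev2 : ∀ᶠ n in Filter.atTop, ‖x (φ n) - y‖ < ε := by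
    obtain ⟨N, hN⟩ := Metric.tendsto_atTop.mp hconvX ε hε
    refine Filter.eventually_atTop.mpr ⟨N, fun n hn => ?_⟩
    have := hN n hn
    rwa [dist_eq_norm] at this
  have hev3 : ∀ᶠ n in Filter.atTop, ‖f (φ n) - g‖ < ε := by
    obtain ⟨N, hN⟩ := Metric.tendsto_atTop.mp hconvF ε hε
    refine Filter.eventually_atTop.mpr ⟨N, fun n hn => ?_⟩
    have := hN n hn
    rwa [dist_eq_norm] at this
  obtain ⟨n, ⟨h1, h2⟩, h3⟩ := ((hev1.and hev2).and hev3).exists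
  -- construct the contradiction
  set m := φ n
  set S : X →L[ℝ] X := Tlim + (T m - w m) with hS
  have hSagree : ∀ (z : X) (h : StrongDual ℝ X), ‖z‖ = 1 → ‖h‖ = 1 → h z = 1 →
      h (S z) = h (Tlim z) := by
    intro z h hz hh hhz
    have hAz : h ((A m) z) = 0 := hA m z h hz hh hhz
    have : S z = Tlim z + (A m) z := by
      rw [hS]
      have : T m - w m = A m := by rw [← hAw m]; abel
      rw [this]
      simp
    rw [this, map_add, hAz, add_zero]
  have hnuS : nuRad S = 1 := by
    rw [nuRad_congr hSagree, hnuTlim]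
  have hgSy : |g (S y)| = 1 := by
    rw [hSagree y g hy1 hg1 hgy, hattain]
  have hTmS : ‖T m - S‖ < ε := by
    have : T m - S = w m - Tlim := by rw [hS]; abel
    rw [this]
    exact h1
  exact absurd (hbad m S y g hy1 hg1 hgy hnuS hgSy hTmS h2) (not_le.mpr h3)
end

section
/- Let $X$ be a reflexive Banach space. Then $X$ has the Bishop-Phelps-Bollobás property for numerical radius if and only if its dual $X^*$ has it; moreover, the moduli coincide: $\eta_{\mathrm{nu}}(X)(\varepsilon) = \eta_{\mathrm{nu}}(X^*)(\varepsilon)$ for every $\varepsilon \in (0,1)$. -/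
open NormedSpace

/-- The modulus of the Bishop-Phelps-Bollobás property for numerical radius:
`η_nu(X)(ε)` is the supremum of all `η > 0` witnessing the BPBp-nu statement for `ε`
(and `0` if there is no such `η`, since `sSup ∅ = 0` in `ℝ`). -/
noncomputable def etaNu (X : Type*) [NormedAddCommGroup X] [NormedSpace ℝ X] (ε : ℝ) : ℝ :=
  sSup {η : ℝ | 0 < η ∧
    ∀ (T : X →L[ℝ] X) (x : X) (f : StrongDual ℝ X),
      nuRad T = 1 → ‖x‖ = 1 → ‖f‖ = 1 → f x = 1 → 1 - η < |f (T x)| →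
      ∃ (S : X →L[ℝ] X) (y : X) (g : StrongDual ℝ X),
        ‖y‖ = 1 ∧ ‖g‖ = 1 ∧ g y = 1 ∧ nuRad S = 1 ∧ |g (S y)| = 1 ∧
        ‖T - S‖ < ε ∧ ‖x - y‖ < ε ∧ ‖f - g‖ < ε}

/-- A Banach space has the BPBp-nu iff its modulus is positive for every `ε ∈ (0,1)`. -/
def HasBPBnu (X : Type*) [NormedAddCommGroup X] [NormedSpace ℝ X] : Prop :=
  ∀ ε : ℝ, 0 < ε → ε < 1 → 0 < etaNu X ε

section Adj

variable {E : Type*} [NormedAddCommGroup E] [NormedSpace ℝ E]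

/-- The adjoint (dual map) of an operator. -/
noncomputable def adjOp (T : E →L[ℝ] E) : StrongDual ℝ E →L[ℝ] StrongDual ℝ E :=
  LinearMap.mkContinuous
    { toFun := fun f => f.comp T
      map_add' := fun f g => by ext x; simp
      map_smul' := fun c f => by ext x; simp }
    ‖T‖ (fun f => by
      calc ‖f.comp T‖ ≤ ‖f‖ * ‖T‖ := ContinuousLinearMap.opNorm_comp_le _ _
        _ = ‖T‖ * ‖f‖ := mul_comm _ _)

@[simp] lemma adjOp_apply (T : E →L[ℝ] E) (f : StrongDual ℝ E) (x : E) :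
    adjOp T f x = f (T x) := rfl

lemma adjOp_sub (T S : E →L[ℝ] E) : adjOp (T - S) = adjOp T - adjOp S := by
  ext f x
  simp

lemma norm_adjOp (T : E →L[ℝ] E) : ‖adjOp T‖ = ‖T‖ := by
  refine le_antisymm ?_ ?_
  · refine ContinuousLinearMap.opNorm_le_bound _ (norm_nonneg T) fun f => ?_
    calc ‖adjOp T f‖ = ‖f.comp T‖ := rfl
      _ ≤ ‖f‖ * ‖T‖ := ContinuousLinearMap.opNorm_comp_le _ _
      _ = ‖T‖ * ‖f‖ := mul_comm _ _
  · refine ContinuousLinearMap.opNorm_le_bound _ (norm_nonneg (adjOp T)) fun x => ?_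
    refine norm_le_dual_bound ℝ (T x) (by positivity) fun f => ?_
    calc ‖f (T x)‖ = ‖adjOp T f x‖ := rfl
      _ ≤ ‖adjOp T f‖ * ‖x‖ := (adjOp T f).le_opNorm x
      _ ≤ (‖adjOp T‖ * ‖f‖) * ‖x‖ := by
          gcongr; exact (adjOp T).le_opNorm f
      _ = ‖adjOp T‖ * ‖x‖ * ‖f‖ := by ring

lemma norm_incl (x : E) : ‖inclusionInDoubleDual ℝ E x‖ = ‖x‖ :=
  (inclusionInDoubleDualLi ℝ).norm_map x

lemma adjOp_surj (hrefl : Function.Surjective (inclusionInDoubleDual ℝ E))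
    (S' : StrongDual ℝ E →L[ℝ] StrongDual ℝ E) : ∃ S : E →L[ℝ] E, adjOp S = S' := by
  have hrefl' : Function.Surjective (inclusionInDoubleDualLi ℝ (E := E)) := hrefl
  set e : E ≃ₗᵢ[ℝ] StrongDual ℝ (StrongDual ℝ E) :=
    LinearIsometryEquiv.ofSurjective (inclusionInDoubleDualLi ℝ) hrefl' with he
  have hcoe : ∀ w : E, (e w : StrongDual ℝ (StrongDual ℝ E)) = inclusionInDoubleDual ℝ E w := fun w => rfl
  refine ⟨(e.symm.toLinearIsometry.toContinuousLinearMap.comp (adjOp S')).comp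
    e.toLinearIsometry.toContinuousLinearMap, ?_⟩
  ext f x
  show f (e.symm (adjOp S' (e x))) = S' f x
  have h1 : ∀ (w : E) (g : StrongDual ℝ E), g w = e w g := fun w g => rfl
  rw [h1 (e.symm (adjOp S' (e x))) f, e.apply_symm_apply]
  rfl

lemma nuRad_adjOp (hrefl : Function.Surjective (inclusionInDoubleDual ℝ E))
    (T : E →L[ℝ] E) : nuRad (adjOp T) = nuRad T := by
  unfold nuRad
  congr 1
  ext r
  constructor
  · rintro ⟨x', f', hx', hf', hfx', hr⟩
    obtain ⟨x, hx⟩ := hrefl f'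
    refine ⟨x, x', ?_, hx', ?_, ?_⟩
    · rw [← norm_incl x, hx]; exact hf'
    · rw [← hfx', ← hx]; rfl
    · rw [hr, ← hx]; rfl
  · rintro ⟨x, f, hx, hf, hfx, hr⟩
    exact ⟨f, inclusionInDoubleDual ℝ E x, hf, by rw [norm_incl, hx], hfx, hr⟩

end Adj

lemma etaNu_eq_dual (X : Type*) [NormedAddCommGroup X] [NormedSpace ℝ X] [CompleteSpace X]
    (hrefl : Function.Surjective (inclusionInDoubleDual ℝ X)) (ε : ℝ) :
    etaNu X ε = etaNu (StrongDual ℝ X) ε := by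
  unfold etaNu
  congr 1
  ext η
  refine and_congr_right fun hη => ⟨fun h T' x' f' hnu hx' hf' hfx' hlt => ?_,
    fun h T x f hnu hx hf hfx hlt => ?_⟩
  · obtain ⟨T, hT⟩ := adjOp_surj hrefl T'
    obtain ⟨x, hx⟩ := hrefl f'
    have hxn : ‖x‖ = 1 := by rw [← norm_incl x, hx]; exact hf'
    have hpair : x' x = 1 := by rw [← hfx', ← hx]; rfl
    have hnuT : nuRad T = 1 := by rw [← nuRad_adjOp hrefl, hT]; exact hnu
    have hlt' : 1 - η < |x' (T x)| := by
      have heq : f' (T' x') = x' (T x) := by rw [← hT, ← hx]; rfl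
      rwa [heq] at hlt
    obtain ⟨S, y, g, hy, hg, hgy, hnuS, habs, hTS, hxy, hfg⟩ :=
      h T x x' hnuT hxn hx' hpair hlt'
    refine ⟨adjOp S, g, inclusionInDoubleDual ℝ X y, hg, by rw [norm_incl, hy], hgy,
      by rw [nuRad_adjOp hrefl]; exact hnuS, habs, ?_, hfg, ?_⟩
    · rw [← hT, ← adjOp_sub, norm_adjOp]; exact hTS
    · rw [← hx, ← map_sub, norm_incl]; exact hxy
  · have hnu' : nuRad (adjOp T) = 1 := by rw [nuRad_adjOp hrefl]; exact hnu
    have hxn : ‖inclusionInDoubleDual ℝ X x‖ = 1 := by rw [norm_incl, hx]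
    have hlt' : 1 - η < |inclusionInDoubleDual ℝ X x (adjOp T f)| := hlt
    obtain ⟨S', y', g', hy', hg', hgy', hnuS', habs', hTS', hfy', hxg'⟩ :=
      h (adjOp T) f (inclusionInDoubleDual ℝ X x) hnu' hf hxn hfx hlt'
    obtain ⟨S, hS⟩ := adjOp_surj hrefl S'
    obtain ⟨y, hy⟩ := hrefl g'
    have hyn : ‖y‖ = 1 := by rw [← norm_incl y, hy]; exact hg'
    refine ⟨S, y, y', hyn, hy', by rw [← hgy', ← hy]; rfl, ?_, ?_, ?_, ?_, hfy'⟩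
    · rw [← nuRad_adjOp hrefl, hS]; exact hnuS'
    · have heq : y' (S y) = g' (S' y') := by rw [← hS, ← hy]; rfl
      rw [heq]; exact habs'
    · have heq : ‖T - S‖ = ‖adjOp T - S'‖ := by rw [← hS, ← adjOp_sub, norm_adjOp]
      rw [heq]; exact hTS'
    · have heq : ‖x - y‖ = ‖inclusionInDoubleDual ℝ X x - g'‖ := by
        rw [← hy, ← map_sub, norm_incl]
      rw [heq]; exact hxg'

/-- For a reflexive Banach space `X`, the moduli of the BPBp-nu of `X` and of its dual `X*`
coincide; in particular, `X` has the BPBp-nu if and only if `X*` does. -/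
theorem stmt4 (X : Type*) [NormedAddCommGroup X] [NormedSpace ℝ X] [CompleteSpace X]
    (hrefl : Function.Surjective (inclusionInDoubleDual ℝ X)) :
    (∀ ε : ℝ, 0 < ε → ε < 1 → etaNu X ε = etaNu (StrongDual ℝ X) ε) ∧
    (HasBPBnu X ↔ HasBPBnu (StrongDual ℝ X)) := by
  refine ⟨fun ε _ _ => etaNu_eq_dual X hrefl ε, ?_⟩
  constructor <;> intro h ε h1 h2
  · rw [← etaNu_eq_dual X hrefl ε]; exact h ε h1 h2
  · rw [etaNu_eq_dual X hrefl ε]; exact h ε h1 h2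
end

section
/- Let $Y, Z$ be Banach spaces and $X = Y \oplus_1 Z$ (the $\ell_1$-direct sum). Suppose $(y, z) \in S_X$, $(y^*, z^*) \in S_{X^*}$ (so $\|y\| + \|z\| = 1$ and $\max\{\|y^*\|, \|z^*\|\} = 1$) satisfy $y^*(y) + z^*(z) = 1$, and $S \in \mathcal{L}(X)$ satisfies $v(S) = 1 = |y^*(S(y,z)_Y) + z^*(S(y,z)_Z)|$ where $(S w)_Y, (S w)_Z$ denote components. If $\|S(0, z')\| < \varepsilon \|z'\|$ for all $z' \in Z$ with some $\varepsilon < 1$ and $z \ne 0$, then a contradiction arises; consequently, in this situation $z = 0$. -/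
open NormedSpace

/-- Claim 1 in the proof of Theorem 5.2: let `X = Y ⊕₁ Z`, let `x = (y, z) ∈ S_X` and
`x* ∈ S_{X*}` with `x*(x) = 1`, and let `S ∈ L(X)` with `v(S) = 1 = |x*(Sx)|`. If
`‖S(0, z')‖ < ε‖z'‖` for every `z' ≠ 0`, where `ε < 1`, then `z = 0`. -/
theorem stmt10 (Y Z : Type*) [NormedAddCommGroup Y] [NormedSpace ℝ Y] [CompleteSpace Y]
    [NormedAddCommGroup Z] [NormedSpace ℝ Z] [CompleteSpace Z]
    (y : Y) (z : Z)
    (x : WithLp 1 (Y × Z)) (hx : x = (WithLp.equiv 1 (Y × Z)).symm (y, z))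
    (hxnorm : ‖x‖ = 1)
    (xstar : StrongDual ℝ (WithLp 1 (Y × Z))) (hxstar : ‖xstar‖ = 1) (hpair : xstar x = 1)
    (S : WithLp 1 (Y × Z) →L[ℝ] WithLp 1 (Y × Z))
    (hvS : nuRad S = 1) (hattain : |xstar (S x)| = 1)
    (ε : ℝ) (hε1 : ε < 1)
    (hsmall : ∀ z' : Z, z' ≠ 0 → ‖S ((WithLp.equiv 1 (Y × Z)).symm (0, z'))‖ < ε * ‖z'‖) :
    z = 0 := by
  by_contra hz
  set xy : WithLp 1 (Y × Z) := (WithLp.equiv 1 (Y × Z)).symm (y, 0) with hxy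
  set xz : WithLp 1 (Y × Z) := (WithLp.equiv 1 (Y × Z)).symm (0, z) with hxz
  have hxynorm : ‖xy‖ = ‖y‖ := WithLp.norm_toLp_fst 1 Y Z y
  have hxznorm : ‖xz‖ = ‖z‖ := WithLp.norm_toLp_snd 1 Y Z z
  have hsum : xy + xz = x := by
    rw [hx, hxy, hxz, WithLp.equiv_symm_apply, ← WithLp.toLp_add]
    simp
  -- norm of x
  have hnormsum : ‖y‖ + ‖z‖ = 1 := by
    have h := WithLp.prod_norm_eq_add (p := 1) (by norm_num) x
    rw [hx] at h
    norm_num at h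
    rw [hx, WithLp.equiv_symm_apply] at hxnorm
    rw [hxnorm] at h
    simpa using h.symm
  -- xstar attains the norms componentwise
  have hboundy : xstar xy ≤ ‖y‖ := by
    calc xstar xy ≤ ‖xstar xy‖ := le_abs_self _
    _ ≤ ‖xstar‖ * ‖xy‖ := xstar.le_opNorm xy
    _ = ‖y‖ := by rw [hxstar, hxynorm, one_mul]
  have hboundz : xstar xz ≤ ‖z‖ := by
    calc xstar xz ≤ ‖xstar xz‖ := le_abs_self _
    _ ≤ ‖xstar‖ * ‖xz‖ := xstar.le_opNorm xz
    _ = ‖z‖ := by rw [hxstar, hxznorm, one_mul]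
  have hadd : xstar xy + xstar xz = 1 := by
    rw [← map_add, hsum, hpair]
  have heqy : xstar xy = ‖y‖ := by linarith
  -- bound |xstar (S xy)| ≤ ‖y‖ via numerical radius
  have hbddAbove : BddAbove {r : ℝ | ∃ (x : WithLp 1 (Y × Z))
      (f : StrongDual ℝ (WithLp 1 (Y × Z))), ‖x‖ = 1 ∧ ‖f‖ = 1 ∧ f x = 1 ∧ r = |f (S x)|} := by
    refine ⟨‖S‖, ?_⟩
    rintro r ⟨u, f, hu, hf, -, rfl⟩
    calc |f (S u)| ≤ ‖f‖ * ‖S u‖ := f.le_opNorm (S u)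
    _ ≤ ‖f‖ * (‖S‖ * ‖u‖) := by
        exact mul_le_mul_of_nonneg_left (S.le_opNorm u) (norm_nonneg f)
    _ = ‖S‖ := by rw [hu, hf]; ring
  have hSxy : |xstar (S xy)| ≤ ‖y‖ := by
    rcases eq_or_ne y 0 with hy0 | hy0
    · have hxy0 : xy = 0 := by
        rw [hxy, hy0]
        rfl
      rw [hxy0]
      simp
    · have hypos : (0:ℝ) < ‖y‖ := norm_pos_iff.mpr hy0
      set u : WithLp 1 (Y × Z) := ‖y‖⁻¹ • xy with hu
      have hunorm : ‖u‖ = 1 := by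
        rw [hu, norm_smul, hxynorm]
        simp [abs_of_pos (inv_pos.mpr hypos), inv_mul_cancel₀ hypos.ne']
      have hfu : xstar u = 1 := by
        rw [hu, map_smul, heqy]
        simp [inv_mul_cancel₀ hypos.ne']
      have hmem : |xstar (S u)| ∈ {r : ℝ | ∃ (x : WithLp 1 (Y × Z))
          (f : StrongDual ℝ (WithLp 1 (Y × Z))), ‖x‖ = 1 ∧ ‖f‖ = 1 ∧ f x = 1 ∧ r = |f (S x)|} :=
        ⟨u, xstar, hunorm, hxstar, hfu, rfl⟩
      have hle : |xstar (S u)| ≤ 1 := by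
        have := le_csSup hbddAbove hmem
        rwa [← nuRad, hvS] at this
      have : xstar (S u) = ‖y‖⁻¹ * xstar (S xy) := by
        rw [hu, map_smul, map_smul]; rfl
      rw [this] at hle
      rw [abs_mul, abs_of_pos (inv_pos.mpr hypos)] at hle
      calc |xstar (S xy)| = ‖y‖ * (‖y‖⁻¹ * |xstar (S xy)|) := by
            field_simp
      _ ≤ ‖y‖ * 1 := mul_le_mul_of_nonneg_left hle hypos.le
      _ = ‖y‖ := mul_one _
  -- bound |xstar (S xz)| < ε ‖z‖
  have hzpos : (0:ℝ) < ‖z‖ := norm_pos_iff.mpr hz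
  have hSxz : |xstar (S xz)| < ε * ‖z‖ := by
    calc |xstar (S xz)| ≤ ‖xstar‖ * ‖S xz‖ := xstar.le_opNorm _
    _ = ‖S xz‖ := by rw [hxstar, one_mul]
    _ < ε * ‖z‖ := hsmall z hz
  -- conclude
  have : (1:ℝ) < 1 := by
    calc (1:ℝ) = |xstar (S x)| := hattain.symm
    _ = |xstar (S xy) + xstar (S xz)| := by rw [← hsum, map_add, map_add]
    _ ≤ |xstar (S xy)| + |xstar (S xz)| := abs_add_le _ _
    _ < ‖y‖ + ε * ‖z‖ := by linarith
    _ < ‖y‖ + ‖z‖ := by nlinarith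
    _ = 1 := hnormsum
  exact absurd this (lt_irrefl 1)
end

section
/- Let $Y$ be an infinite-dimensional separable Banach space. Fix $e \in S_Y$, $e_1^* \in S_{Y^*}$ with $e_1^*(e) = 1$, and a sequence $\{e_k^* : k \ge 2\}$ of norm-one functionals that separates the points of $Y$. For $\varepsilon \in (0, 1/2)$ define $q(y) = \max\{(1-\varepsilon)\|y\|, |e_1^*(y)|\}$, $p(y) = \big(\sum_{k=1}^\infty 2^{-k}|e_k^*(y)|^2\big)^{1/2}$, and $\|y\|_1 = (1-\varepsilon)q(y) + \varepsilon\, p(y)/p(e)$. Then $\|\cdot\|_1$ is a strictly convex equivalent norm on $Y$ satisfying $(1-\varepsilon)^2\|y\| \le \|y\|_1 \le (1+\varepsilon)\|y\|$ for all $y \in Y$, and $\|\cdot\|_1$ is not locally uniformly convex at the point $e$. -/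
open NormedSpace Filter
open scoped ENNReal

noncomputable def mySeq (f : ℕ → ℝ) (hf : Summable fun k => f k ^ 2) :
    lp (fun _ : ℕ => ℝ) 2 :=
  ⟨f, by
    apply memℓp_gen
    have : (2 : ℝ≥0∞).toReal = (2 : ℕ) := by simp
    simpa [this, Real.rpow_natCast, sq_abs, Real.norm_eq_abs] using hf⟩

lemma mySeq_apply (f : ℕ → ℝ) (hf : Summable fun k => f k ^ 2) (k : ℕ) :
    (mySeq f hf : ∀ _ : ℕ, ℝ) k = f k := rfl

lemma mySeq_norm (f : ℕ → ℝ) (hf : Summable fun k => f k ^ 2) :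
    ‖mySeq f hf‖ = Real.sqrt (∑' k, f k ^ 2) := by
  have h2 : (0:ℝ) < (2 : ℝ≥0∞).toReal := by simp
  have hnat : (2 : ℝ≥0∞).toReal = ((2:ℕ) : ℝ) := by simp
  have hts : (∑' i, ‖(mySeq f hf : ∀ _ : ℕ, ℝ) i‖ ^ (2 : ℝ≥0∞).toReal) = ∑' k, f k ^ 2 := by
    apply tsum_congr
    intro k
    rw [hnat, Real.rpow_natCast, mySeq_apply]
    simp [sq_abs, Real.norm_eq_abs]
  rw [lp.norm_eq_tsum_rpow h2, hts, Real.sqrt_eq_rpow, hnat]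
  norm_num

set_option maxHeartbeats 1000000 in
/-- The renorming lemma (Lemma 5.4): on an infinite-dimensional separable Banach space `Y`,
given `e ∈ S_Y`, a norming functional `e₁* = estar 1`, and norm-one functionals
`estar k`, `k ≥ 2`, separating the points of `Y`, the norm
`‖y‖₁ = (1-ε) max{(1-ε)‖y‖, |e₁*(y)|} + ε p(y)/p(e)`, where
`p(y) = (∑ₖ 2⁻ᵏ |eₖ*(y)|²)^{1/2}`, is a strictly convex equivalent norm with
`(1-ε)²‖y‖ ≤ ‖y‖₁ ≤ (1+ε)‖y‖` which is not locally uniformly convex at `e`. -/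
theorem stmt11 (Y : Type*) [NormedAddCommGroup Y] [NormedSpace ℝ Y] [CompleteSpace Y]
    [TopologicalSpace.SeparableSpace Y] (hinf : ¬ FiniteDimensional ℝ Y)
    (e : Y) (he : ‖e‖ = 1)
    (estar : ℕ → StrongDual ℝ Y) (hestar : ∀ k, 1 ≤ k → ‖estar k‖ = 1)
    (he1 : estar 1 e = 1)
    (hsep : ∀ y : Y, (∀ k, 2 ≤ k → estar k y = 0) → y = 0)
    (ε : ℝ) (hε : 0 < ε) (hε2 : ε < 1 / 2)
    (q p N : Y → ℝ)
    (hq : ∀ y, q y = max ((1 - ε) * ‖y‖) |estar 1 y|)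
    (hp : ∀ y, p y = Real.sqrt (∑' k : ℕ, (2 : ℝ)⁻¹ ^ (k + 1) * |estar (k + 1) y| ^ 2))
    (hN : ∀ y, N y = (1 - ε) * q y + ε * (p y / p e)) :
    -- `N` is a norm
    (∀ y, N y = 0 → y = 0) ∧
    (∀ (c : ℝ) (y : Y), N (c • y) = |c| * N y) ∧
    (∀ x y : Y, N (x + y) ≤ N x + N y) ∧
    -- equivalence with the original norm
    (∀ y, (1 - ε) ^ 2 * ‖y‖ ≤ N y ∧ N y ≤ (1 + ε) * ‖y‖) ∧
    -- `N` is strictly convex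
    (∀ x y : Y, N x = 1 → N y = 1 → N ((2⁻¹ : ℝ) • (x + y)) = 1 → x = y) ∧
    -- `N` is not locally uniformly convex at `e`
    N e = 1 ∧
    (∃ u : ℕ → Y,
      Tendsto (fun n => N (u n)) atTop (nhds 1) ∧
      Tendsto (fun n => N (e + u n)) atTop (nhds 2) ∧
      ¬ Tendsto (fun n => N (e - u n)) atTop (nhds 0)) := by
  classical
  have hε1 : ε < 1 := by linarith
  have h1ε : (0:ℝ) < 1 - ε := by linarith
  have hdual : ∀ (k : ℕ) (y : Y), 1 ≤ k → |estar k y| ≤ ‖y‖ := by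
    intro k y hk
    calc |estar k y| = ‖estar k y‖ := (Real.norm_eq_abs _).symm
    _ ≤ ‖estar k‖ * ‖y‖ := (estar k).le_opNorm y
    _ = ‖y‖ := by rw [hestar k hk, one_mul]
  set c : ℕ → ℝ := fun k => (2:ℝ)⁻¹ ^ (k+1) with hc
  have hcpos : ∀ k, 0 < c k := fun k => pow_pos (by norm_num) _
  have hcsum : Summable c := by
    have h := (summable_geometric_of_lt_one (by norm_num : (0:ℝ) ≤ 2⁻¹) (by norm_num)).mul_left
      (2:ℝ)⁻¹
    refine h.congr fun k => ?_
    simp [hc, pow_succ, mul_comm]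
  have hctsum : ∑' k, c k = 1 := by
    have h : ∑' k, c k = 2⁻¹ * ∑' k : ℕ, (2:ℝ)⁻¹ ^ k := by
      rw [← tsum_mul_left]
      exact tsum_congr fun k => by simp [hc, pow_succ, mul_comm]
    rw [h, tsum_geometric_of_lt_one (by norm_num) (by norm_num)]
    norm_num
  -- summability of the weighted squares
  have hsum : ∀ y : Y, Summable fun k => c k * |estar (k+1) y| ^ 2 := by
    intro y
    refine Summable.of_nonneg_of_le (fun k => by positivity) (fun k => ?_) (hcsum.mul_right (‖y‖^2))
    have h1 := hdual (k+1) y (Nat.le_add_left 1 k)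
    have h2 : |estar (k+1) y| ^ 2 ≤ ‖y‖ ^ 2 := by
      apply sq_le_sq' <;> [linarith [abs_nonneg (estar (k+1) y)]; exact h1]
    exact mul_le_mul_of_nonneg_left h2 (hcpos k).le
  set g : Y → ℕ → ℝ := fun y k => Real.sqrt (c k) * estar (k+1) y with hg
  have hgsq : ∀ y k, g y k ^ 2 = c k * |estar (k+1) y| ^ 2 := by
    intro y k
    rw [hg]
    simp only [mul_pow, Real.sq_sqrt (hcpos k).le, sq_abs]
  have hgsum : ∀ y : Y, Summable fun k => g y k ^ 2 := by
    intro y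
    exact (hsum y).congr fun k => (hgsq y k).symm
  set T : Y → lp (fun _ : ℕ => ℝ) 2 := fun y => mySeq (g y) (hgsum y) with hT
  have hTnorm : ∀ y, ‖T y‖ = p y := by
    intro y
    rw [hT, mySeq_norm, hp]
    congr 1
    exact tsum_congr fun k => hgsq y k
  have hTadd : ∀ x y, T (x + y) = T x + T y := by
    intro x y
    apply lp.ext
    rw [lp.coeFn_add]
    funext k
    show g (x+y) k = g x k + g y k
    simp [hg, map_add, mul_add]
  have hTsmul : ∀ (r : ℝ) (y : Y), T (r • y) = r • T y := by
    intro r y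
    apply lp.ext
    rw [lp.coeFn_smul]
    funext k
    show g (r • y) k = r * g y k
    simp [hg, map_smul]
    ring
  have hTzero : ∀ y, T y = 0 → y = 0 := by
    intro y hy
    apply hsep
    intro k hk
    have hco : ∀ j, g y j = 0 := by
      intro j
      have := congrArg (fun f : lp (fun _ : ℕ => ℝ) 2 => (f : ∀ _ : ℕ, ℝ) j) hy
      simpa [hT, mySeq_apply] using this
    obtain ⟨m, rfl⟩ : ∃ m, k = m + 1 := ⟨k - 1, by omega⟩
    have := hco m
    rw [hg] at this
    simp only at this
    rcases mul_eq_zero.mp this with h | h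
    · exact absurd h (by positivity)
    · exact h
  -- basic facts about p
  have hp_nonneg : ∀ y, 0 ≤ p y := fun y => (hTnorm y) ▸ norm_nonneg _
  have hp_add : ∀ x y, p (x + y) ≤ p x + p y := by
    intro x y
    rw [← hTnorm, ← hTnorm, ← hTnorm, hTadd]
    exact norm_add_le _ _
  have hp_smul : ∀ (r : ℝ) y, p (r • y) = |r| * p y := by
    intro r y
    rw [← hTnorm, ← hTnorm, hTsmul, norm_smul, Real.norm_eq_abs]
  have hp_le : ∀ y, p y ≤ ‖y‖ := by
    intro y
    rw [hp]
    have h1 : (∑' k, c k * |estar (k+1) y| ^ 2) ≤ ∑' k, c k * ‖y‖ ^ 2 := by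
      refine Summable.tsum_le_tsum (fun k => ?_) (hsum y) (hcsum.mul_right _)
      have h1 := hdual (k+1) y (Nat.le_add_left 1 k)
      have h2 : |estar (k+1) y| ^ 2 ≤ ‖y‖ ^ 2 := by
        apply sq_le_sq' <;> [linarith [abs_nonneg (estar (k+1) y)]; exact h1]
      exact mul_le_mul_of_nonneg_left h2 (hcpos k).le
    have h2 : (∑' k, c k * ‖y‖ ^ 2) = ‖y‖ ^ 2 := by
      rw [tsum_mul_right, hctsum, one_mul]
    calc Real.sqrt (∑' k, c k * |estar (k+1) y| ^ 2)
        ≤ Real.sqrt (‖y‖ ^ 2) := Real.sqrt_le_sqrt (h1.trans_eq h2)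
      _ = ‖y‖ := Real.sqrt_sq (norm_nonneg y)
  have hpe_lb : Real.sqrt 2⁻¹ ≤ p e := by
    rw [hp]
    apply Real.sqrt_le_sqrt
    have h0 : c 0 * |estar 1 e| ^ 2 = 2⁻¹ := by simp [hc, he1]
    calc (2:ℝ)⁻¹ = c 0 * |estar (0+1) e| ^ 2 := by simpa using h0.symm
      _ ≤ ∑' k, c k * |estar (k+1) e| ^ 2 := Summable.le_tsum (hsum e) 0 fun j _ => by positivity
  have hpe_pos : 0 < p e := lt_of_lt_of_le (Real.sqrt_pos.mpr (by norm_num)) hpe_lb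
  -- basic facts about q
  have hq_le : ∀ y, q y ≤ ‖y‖ := by
    intro y
    rw [hq]
    refine max_le ?_ (hdual 1 y le_rfl)
    nlinarith [norm_nonneg y]
  have hq_ge : ∀ y, (1 - ε) * ‖y‖ ≤ q y := fun y => (hq y) ▸ le_max_left _ _
  have hq_add : ∀ x y, q (x + y) ≤ q x + q y := by
    intro x y
    rw [hq, hq, hq]
    apply max_le
    · calc (1-ε) * ‖x + y‖ ≤ (1-ε) * (‖x‖ + ‖y‖) :=
            mul_le_mul_of_nonneg_left (norm_add_le x y) h1ε.le
        _ = (1-ε)*‖x‖ + (1-ε)*‖y‖ := by ring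
        _ ≤ _ := add_le_add (le_max_left _ _) (le_max_left _ _)
    · calc |estar 1 (x + y)| = |estar 1 x + estar 1 y| := by rw [map_add]
        _ ≤ |estar 1 x| + |estar 1 y| := abs_add_le _ _
        _ ≤ _ := add_le_add (le_max_right _ _) (le_max_right _ _)
  have hq_smul : ∀ (r : ℝ) y, q (r • y) = |r| * q y := by
    intro r y
    rw [hq, hq]
    have h1 : estar 1 (r • y) = r * estar 1 y := by simp [map_smul]
    rw [norm_smul, Real.norm_eq_abs, h1, abs_mul, mul_max_of_nonneg _ _ (abs_nonneg r)]
    ring_nf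
  -- N facts
  have hN_smul : ∀ (r : ℝ) (y : Y), N (r • y) = |r| * N y := by
    intro r y
    rw [hN, hN, hq_smul, hp_smul]
    ring
  have hN_zero : N 0 = 0 := by
    have := hN_smul 0 0
    simpa using this
  have hN_lower : ∀ y, (1 - ε) ^ 2 * ‖y‖ ≤ N y := by
    intro y
    rw [hN]
    have h1 := hq_ge y
    have h2 : 0 ≤ ε * (p y / p e) := mul_nonneg hε.le (div_nonneg (hp_nonneg y) hpe_pos.le)
    nlinarith
  have hsqrt2 : Real.sqrt 2 ≤ 2 := by
    nlinarith [Real.sq_sqrt (by norm_num : (0:ℝ) ≤ 2), Real.sqrt_nonneg 2]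
  have hp_div : ∀ y, p y / p e ≤ 2 * ‖y‖ := by
    intro y
    have h1 : p y / p e ≤ ‖y‖ / Real.sqrt 2⁻¹ :=
      div_le_div₀ (norm_nonneg y) (hp_le y) (Real.sqrt_pos.mpr (by norm_num)) hpe_lb
    have h2 : Real.sqrt (2:ℝ)⁻¹ = (Real.sqrt 2)⁻¹ := Real.sqrt_inv 2
    have h3 : ‖y‖ / Real.sqrt 2⁻¹ = ‖y‖ * Real.sqrt 2 := by
      rw [h2, div_inv_eq_mul]
    calc p y / p e ≤ ‖y‖ * Real.sqrt 2 := h3 ▸ h1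
      _ ≤ 2 * ‖y‖ := by nlinarith [norm_nonneg y, Real.sqrt_nonneg 2]
  have hN_upper : ∀ y, N y ≤ (1 + ε) * ‖y‖ := by
    intro y
    rw [hN]
    have h1 := hq_le y
    have h2 := hp_div y
    nlinarith [norm_nonneg y]
  have hN_add : ∀ x y : Y, N (x + y) ≤ N x + N y := by
    intro x y
    rw [hN, hN, hN]
    have h1 := hq_add x y
    have h2 := hp_add x y
    have h3 : p (x + y) / p e ≤ p x / p e + p y / p e := by
      rw [← add_div]
      exact div_le_div_of_nonneg_right h2 hpe_pos.le
    nlinarith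
  have hNe : N e = 1 := by
    rw [hN, hq, he, he1]
    have h1 : max ((1 - ε) * 1) |(1:ℝ)| = 1 := by
      rw [abs_one]
      exact max_eq_right (by linarith)
    rw [h1, div_self hpe_pos.ne']
    ring
  -- strict convexity
  have hstrict : ∀ x y : Y, N x = 1 → N y = 1 → N ((2⁻¹ : ℝ) • (x + y)) = 1 → x = y := by
    intro x y hx hy hm
    have hx0 : x ≠ 0 := by rintro rfl; rw [hN_zero] at hx; norm_num at hx
    have hy0 : y ≠ 0 := by rintro rfl; rw [hN_zero] at hy; norm_num at hy
    have hTx0 : T x ≠ 0 := fun h => hx0 (hTzero x h)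
    have hTy0 : T y ≠ 0 := fun h => hy0 (hTzero y h)
    have hsum2 : N (x + y) = 2 := by
      have h := hN_smul 2⁻¹ (x + y)
      rw [hm] at h
      have : |(2:ℝ)⁻¹| = 2⁻¹ := by norm_num
      rw [this] at h
      linarith
    have hqa := hq_add x y
    have hpa := hp_add x y
    have hxE : (1 - ε) * q x + ε * (p x / p e) = 1 := by rw [← hN x]; exact hx
    have hyE : (1 - ε) * q y + ε * (p y / p e) = 1 := by rw [← hN y]; exact hy
    have hsE : (1 - ε) * q (x + y) + ε * (p (x + y) / p e) = 2 := by
      rw [← hN (x + y)]; exact hsum2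
    have hpeq : p (x + y) = p x + p y := by
      refine le_antisymm hpa ?_
      by_contra hlt
      push_neg at hlt
      have hdd : p (x + y) / p e < (p x + p y) / p e := by gcongr
      have hdiv : (p x + p y) / p e = p x / p e + p y / p e := add_div _ _ _
      have k1 : (1 - ε) * q (x + y) ≤ (1 - ε) * (q x + q y) :=
        mul_le_mul_of_nonneg_left hqa h1ε.le
      have k2 : ε * (p (x + y) / p e) < ε * ((p x + p y) / p e) :=
        mul_lt_mul_of_pos_left hdd hε
      have k3 : ε * ((p x + p y) / p e) = ε * (p x / p e) + ε * (p y / p e) := by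
        rw [hdiv]; ring
      linarith
    have hnrm : ‖T x + T y‖ = ‖T x‖ + ‖T y‖ := by
      rw [← hTadd, hTnorm, hTnorm, hTnorm, hpeq]
    have hray : SameRay ℝ (T x) (T y) := sameRay_iff_norm_add.mpr hnrm
    obtain ⟨r, hr, hrxy⟩ := (exists_pos_left_iff_sameRay hTx0 hTy0).mpr hray
    have hTneg : ∀ z : Y, T (-z) = -T z := by
      intro z
      have := hTsmul (-1) z
      simpa using this
    have hTrx : T (r • x - y) = 0 := by
      rw [sub_eq_add_neg, hTadd, hTneg, hTsmul, hrxy, add_neg_cancel]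
    have hrx : r • x = y := sub_eq_zero.mp (hTzero _ hTrx)
    have hNy : N y = r * N x := by
      rw [← hrx, hN_smul, abs_of_pos hr]
    rw [hx, hy] at hNy
    have hr1 : r = 1 := by linarith
    rw [hr1, one_smul] at hrx
    exact hrx
  -- kernel vectors
  have hker : ∀ n : ℕ, ∃ hv : Y, ‖hv‖ = ε ∧ ∀ k, k ≤ n → estar (k+1) hv = 0 := by
    intro n
    set L : Y →ₗ[ℝ] (Fin (n+1) → ℝ) :=
      LinearMap.pi (fun i : Fin (n+1) => ((estar ((i:ℕ)+1)) : Y →L[ℝ] ℝ).toLinearMap) with hL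
    have hni : ¬ Function.Injective L := fun hinj => hinf (FiniteDimensional.of_injective L hinj)
    obtain ⟨a, b, hab, hne⟩ := Function.not_injective_iff.mp hni
    set v := a - b with hv
    have hv0 : v ≠ 0 := sub_ne_zero.mpr hne
    have hLv : L v = 0 := by rw [hv, map_sub, hab, sub_self]
    refine ⟨(ε / ‖v‖) • v, ?_, ?_⟩
    · rw [norm_smul, Real.norm_eq_abs, abs_of_pos (div_pos hε (norm_pos_iff.mpr hv0)),
        div_mul_cancel₀ _ (norm_ne_zero_iff.mpr hv0)]
    · intro k hk
      have hz : estar (k+1) v = 0 := by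
        have := congrFun hLv (⟨k, by omega⟩ : Fin (n+1))
        simpa [hL] using this
      rw [map_smul]
      simp [hz]
  choose h hhnorm hhker using hker
  set u : ℕ → Y := fun n => e + h n with hu
  have hp_neg : ∀ z : Y, p (-z) = p z := by
    intro z
    have := hp_smul (-1) z
    simpa using this
  -- p (h n) → 0
  have hS : ∀ n, (∑' k, c k * |estar (k+1) (h n)| ^ 2) ≤ ε ^ 2 * c n := by
    intro n
    have hsm := hsum (h n)
    have htail : Summable (fun k => c (k+(n+1)) * |estar (k+(n+1)+1) (h n)| ^ 2) :=
      (summable_nat_add_iff (f := fun j => c j * |estar (j+1) (h n)| ^ 2) (n+1)).mpr hsm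
    rw [← Summable.sum_add_tsum_nat_add (n+1) hsm]
    have h0 : ∑ i ∈ Finset.range (n+1), c i * |estar (i+1) (h n)| ^ 2 = 0 := by
      apply Finset.sum_eq_zero
      intro i hi
      rw [hhker n i (Nat.lt_succ_iff.mp (Finset.mem_range.mp hi))]
      simp
    rw [h0, zero_add]
    have hcsplit : ∀ k, c (k+(n+1)) = c n * c k := by
      intro k
      rw [hc]
      simp only
      rw [← pow_add]
      congr 1
      omega
    have hb : ∀ k, c (k+(n+1)) * |estar (k+(n+1)+1) (h n)| ^ 2 ≤ ε ^ 2 * c n * c k := by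
      intro k
      rw [hcsplit k]
      have h1 := hdual (k+(n+1)+1) (h n) (Nat.le_add_left 1 _)
      rw [hhnorm n] at h1
      have h2 : |estar (k+(n+1)+1) (h n)| ^ 2 ≤ ε ^ 2 := by
        apply sq_le_sq' <;> [linarith [abs_nonneg (estar (k+(n+1)+1) (h n))]; exact h1]
      calc c n * c k * |estar (k+(n+1)+1) (h n)| ^ 2 ≤ c n * c k * ε ^ 2 :=
            mul_le_mul_of_nonneg_left h2 (by positivity)
        _ = ε ^ 2 * c n * c k := by ring
    calc (∑' k, c (k+(n+1)) * |estar (k+(n+1)+1) (h n)| ^ 2)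
        ≤ ∑' k, ε ^ 2 * c n * c k := Summable.tsum_le_tsum hb htail ((hcsum.mul_left _))
      _ = ε ^ 2 * c n * ∑' k, c k := tsum_mul_left
      _ = ε ^ 2 * c n := by rw [hctsum, mul_one]
  have hc0 : Tendsto c atTop (nhds 0) := by
    have h1 := tendsto_pow_atTop_nhds_zero_of_lt_one (by norm_num : (0:ℝ) ≤ 2⁻¹)
      (by norm_num : (2:ℝ)⁻¹ < 1)
    exact h1.comp (tendsto_add_atTop_nat 1)
  have hphn : Tendsto (fun n => p (h n)) atTop (nhds 0) := by
    have h1 : ∀ n, p (h n) ≤ ε * Real.sqrt (c n) := by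
      intro n
      rw [hp]
      calc Real.sqrt (∑' k, c k * |estar (k+1) (h n)| ^ 2)
          ≤ Real.sqrt (ε ^ 2 * c n) := Real.sqrt_le_sqrt (hS n)
        _ = ε * Real.sqrt (c n) := by
            rw [Real.sqrt_mul (sq_nonneg ε), Real.sqrt_sq hε.le]
    have h4 : Tendsto (fun n => Real.sqrt (c n)) atTop (nhds (Real.sqrt 0)) :=
      (Real.continuous_sqrt.tendsto 0).comp hc0
    have h3 : Tendsto (fun n => ε * Real.sqrt (c n)) atTop (nhds (ε * Real.sqrt 0)) :=
      h4.const_mul ε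
    rw [Real.sqrt_zero, mul_zero] at h3
    exact squeeze_zero (fun n => hp_nonneg (h n)) h1 h3
  -- p (e + h n) → p e  and  p (e + (e + h n)) → 2 * p e
  have hsq1 : ∀ (z : Y) (n : ℕ), p z - p (h n) ≤ p (z + h n) ∧ p (z + h n) ≤ p z + p (h n) := by
    intro z n
    constructor
    · have h1 : p z ≤ p (z + h n) + p (h n) := by
        have h2 := hp_add (z + h n) (-(h n))
        rw [add_neg_cancel_right, hp_neg] at h2
        exact h2
      linarith
    · exact hp_add z (h n)
  have hpu : ∀ (z : Y), Tendsto (fun n => p (z + h n)) atTop (nhds (p z)) := by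
    intro z
    apply tendsto_of_tendsto_of_tendsto_of_le_of_le
      (g := fun n => p z - p (h n)) (h := fun n => p z + p (h n))
    · simpa using tendsto_const_nhds.sub hphn
    · simpa using tendsto_const_nhds.add hphn
    · exact fun n => (hsq1 z n).1
    · exact fun n => (hsq1 z n).2
  have hq_un : ∀ n, q (e + h n) = 1 := by
    intro n
    rw [hq]
    have hz : estar 1 (h n) = 0 := hhker n 0 (Nat.zero_le n)
    have h1 : estar 1 (e + h n) = 1 := by rw [map_add, he1, hz, add_zero]
    rw [h1, abs_one]
    apply max_eq_right
    have h2 : ‖e + h n‖ ≤ 1 + ε := by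
      calc ‖e + h n‖ ≤ ‖e‖ + ‖h n‖ := norm_add_le _ _
        _ = 1 + ε := by rw [he, hhnorm n]
    nlinarith [norm_nonneg (e + h n)]
  have hq_eun : ∀ n, q (e + (e + h n)) = 2 := by
    intro n
    rw [hq]
    have hz : estar 1 (h n) = 0 := hhker n 0 (Nat.zero_le n)
    have h1 : estar 1 (e + (e + h n)) = 2 := by
      rw [map_add, map_add, he1, hz]; ring
    rw [h1]
    have h2 : |(2:ℝ)| = 2 := by norm_num
    rw [h2]
    apply max_eq_right
    have h3 : ‖e + (e + h n)‖ ≤ 2 + ε := by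
      calc ‖e + (e + h n)‖ ≤ ‖e‖ + ‖e + h n‖ := norm_add_le _ _
        _ ≤ ‖e‖ + (‖e‖ + ‖h n‖) := by linarith [norm_add_le e (h n)]
        _ = 2 + ε := by rw [he, hhnorm n]; ring
    nlinarith [norm_nonneg (e + (e + h n))]
  have hpee : p (e + e) = 2 * p e := by
    have h1 : (2:ℝ) • e = e + e := two_smul ℝ e
    rw [← h1, hp_smul]
    norm_num
  have hpu2 : Tendsto (fun n => p (e + (e + h n))) atTop (nhds (2 * p e)) := by
    have h1 : (fun n => p (e + (e + h n))) = fun n => p ((e + e) + h n) := by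
      funext n; rw [add_assoc]
    rw [h1, ← hpee]
    exact hpu (e + e)
  have hNu1 : Tendsto (fun n => N (u n)) atTop (nhds 1) := by
    have hfe : (fun n => N (u n)) = fun n => (1 - ε) + ε * (p (e + h n) / p e) := by
      funext n
      rw [hu]
      simp only
      rw [hN, hq_un n]; ring
    rw [hfe]
    have h1 : Tendsto (fun n => (1 - ε) + ε * (p (e + h n) / p e)) atTop
        (nhds ((1 - ε) + ε * (p e / p e))) :=
      tendsto_const_nhds.add (((hpu e).div_const (p e)).const_mul ε)
    have h2 : (1 - ε) + ε * (p e / p e) = 1 := by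
      rw [div_self hpe_pos.ne']; ring
    rwa [h2] at h1
  have hNu2 : Tendsto (fun n => N (e + u n)) atTop (nhds 2) := by
    have hfe : (fun n => N (e + u n)) = fun n => (1 - ε) * 2 + ε * (p (e + (e + h n)) / p e) := by
      funext n
      rw [hu]
      simp only
      rw [hN, hq_eun n]
    rw [hfe]
    have h1 : Tendsto (fun n => (1 - ε) * 2 + ε * (p (e + (e + h n)) / p e)) atTop
        (nhds ((1 - ε) * 2 + ε * (2 * p e / p e))) :=
      tendsto_const_nhds.add ((hpu2.div_const (p e)).const_mul ε)
    have h2 : (1 - ε) * 2 + ε * (2 * p e / p e) = 2 := by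
      rw [mul_div_assoc, div_self hpe_pos.ne']; ring
    rwa [h2] at h1
  have hNu3 : ¬ Tendsto (fun n => N (e - u n)) atTop (nhds 0) := by
    intro hcon
    have hb : ∀ n, (1 - ε) ^ 2 * ε ≤ N (e - u n) := by
      intro n
      have h1 : e - u n = -(h n) := by rw [hu]; simp only; abel
      rw [h1]
      have h2 := hN_lower (-(h n))
      rw [norm_neg, hhnorm n] at h2
      exact h2
    have h3 := ge_of_tendsto' hcon hb
    have h4 : 0 < (1 - ε) ^ 2 * ε := mul_pos (pow_pos h1ε 2) hε
    linarith
  refine ⟨?_, hN_smul, hN_add, fun y => ⟨hN_lower y, hN_upper y⟩, hstrict, hNe, u, hNu1, hNu2, hNu3⟩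
  intro y hy
  have h1 := hN_lower y
  rw [hy] at h1
  have hp2 : 0 < (1 - ε) ^ 2 := pow_pos h1ε 2
  have h2 : ‖y‖ ≤ 0 := by nlinarith [norm_nonneg y]
  exact norm_le_zero_iff.mp h2
end

section
/- Let $m$ be a finite measure, let $f \in S_{L_1(m)}$ be a nonnegative simple function and $g \in S_{L_\infty(m)}$ such that $\mathrm{Re}\langle f, g\rangle > 1 - \varepsilon^3/16$ for some $0 < \varepsilon < 1$. Then there exist a nonnegative simple function $f_1 \in S_{L_1(m)}$ and $g_1 \in S_{L_\infty(m)}$ with $g_1 = \chi_{\mathrm{supp}(f_1)} + g\,\chi_{\Omega \setminus \mathrm{supp}(f_1)}$, $\langle f_1, g_1\rangle = 1$, $\|f - f_1\|_1 < \varepsilon$, $\|g - g_1\|_\infty < \sqrt{\varepsilon}$, and $\mathrm{supp}(f_1) \subset \mathrm{supp}(f)$. -/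
open MeasureTheory ENNReal

set_option maxHeartbeats 1000000 in
/-- Lemma 4.4: let `m` be a finite measure, `f` a nonnegative norm-one simple function in
`L₁(m)` and `g ∈ S_{L∞(m)}` with `Re⟨f, g⟩ > 1 - ε³/16`. Then there are a nonnegative
norm-one simple function `f₁` with support inside that of `f` and
`g₁ = χ_{supp f₁} + g·χ_{supp f₁ᶜ} ∈ S_{L∞(m)}` such that `⟨f₁, g₁⟩ = 1`,
`‖f - f₁‖₁ < ε` and `‖g - g₁‖_∞ < √ε`. -/
theorem stmt15 {Ω : Type*} [MeasurableSpace Ω] (m : Measure Ω) [IsFiniteMeasure m]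
    (ε : ℝ) (hε : 0 < ε) (hε1 : ε < 1)
    (f : SimpleFunc Ω ℝ) (hf0 : ∀ x, 0 ≤ f x) (hf1 : ∫ x, f x ∂m = 1)
    (g : Ω → ℂ) (hgm : AEStronglyMeasurable g m) (hg : eLpNorm g ⊤ m = 1)
    (hpair : 1 - ε ^ 3 / 16 < (∫ x, (f x : ℂ) * g x ∂m).re) :
    ∃ (f₁ : SimpleFunc Ω ℝ) (g₁ : Ω → ℂ),
      (∀ x, 0 ≤ f₁ x) ∧ (∫ x, f₁ x ∂m) = 1 ∧
      (∀ x, g₁ x = if f₁ x ≠ 0 then 1 else g x) ∧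
      eLpNorm g₁ ⊤ m = 1 ∧
      (∫ x, (f₁ x : ℂ) * g₁ x ∂m) = 1 ∧
      (∫ x, |f x - f₁ x| ∂m) < ε ∧
      eLpNorm (g - g₁) ⊤ m < ENNReal.ofReal (Real.sqrt ε) ∧
      (∀ x, f₁ x ≠ 0 → f x ≠ 0) := by
  obtain ⟨g', hg'sm, hgg'⟩ := hgm
  have hgm : AEStronglyMeasurable g m := ⟨g', hg'sm, hgg'⟩
  -- a.e. bounds on g and g'
  have hgle : ∀ᵐ x ∂m, ‖g x‖ ≤ 1 := by
    have h := ae_le_eLpNormEssSup (f := g) (μ := m)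
    rw [← eLpNorm_exponent_top, hg] at h
    filter_upwards [h] with x hx
    have hx' : ‖g x‖₊ ≤ 1 := by simpa [← ENNReal.coe_one, ENNReal.coe_le_coe] using hx
    exact_mod_cast hx'
  have hg'le : ∀ᵐ x ∂m, ‖g' x‖ ≤ 1 := by
    filter_upwards [hgle, hgg'] with x h1 h2 using h2 ▸ h1
  set δ : ℝ := ε ^ 2 / 4 with hδ
  have hδ0 : 0 < δ := by positivity
  set E : Set Ω := {x | 1 - δ < (g' x).re} with hEdef
  have hE : MeasurableSet E :=
    measurableSet_lt measurable_const (Complex.measurable_re.comp hg'sm.measurable)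
  have hfint : Integrable f m := f.integrable_of_isFiniteMeasure
  set t : ℝ := ∫ x in E, f x ∂m with ht
  -- integrability of the pairing
  have hfgm : AEStronglyMeasurable (fun x => (f x : ℂ) * g x) m := by
    exact (Complex.continuous_ofReal.comp_aestronglyMeasurable
      f.stronglyMeasurable.aestronglyMeasurable).mul ⟨g', hg'sm, hgg'⟩
  have hfg_int : Integrable (fun x => (f x : ℂ) * g x) m := by
    apply Integrable.mono' hfint hfgm
    filter_upwards [hgle] with x hx
    have : ‖(f x : ℂ) * g x‖ = |f x| * ‖g x‖ := by
      simp [norm_mul]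
    rw [this, abs_of_nonneg (hf0 x)]
    calc f x * ‖g x‖ ≤ f x * 1 := by
          exact mul_le_mul_of_nonneg_left hx (hf0 x)
      _ = f x := mul_one _
  have hfre_int : Integrable (fun x => f x * (g' x).re) m := by
    apply Integrable.mono' hfint
      ((f.measurable.mul (Complex.measurable_re.comp hg'sm.measurable)).aestronglyMeasurable)
    filter_upwards [hg'le] with x hx
    simp only [Pi.mul_apply, Function.comp_apply, Real.norm_eq_abs]
    rw [abs_mul, abs_of_nonneg (hf0 x)]
    have : |(g' x).re| ≤ 1 := le_trans (Complex.abs_re_le_norm _) hx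
    calc f x * |(g' x).re| ≤ f x * 1 := mul_le_mul_of_nonneg_left this (hf0 x)
      _ = f x := mul_one _
  -- rewrite the pairing
  have h1 : (∫ x, (f x : ℂ) * g x ∂m).re = ∫ x, f x * (g' x).re ∂m := by
    rw [← RCLike.re_to_complex, ← integral_re hfg_int]
    apply integral_congr_ae
    filter_upwards [hgg'] with x hx
    simp [hx, RCLike.re_to_complex, Complex.re_ofReal_mul]
  -- bound: pairing ≤ t + (1-δ)(1-t)
  have htsplit : (∫ x in E, f x ∂m) + ∫ x in Eᶜ, f x ∂m = 1 := by
    rw [integral_add_compl hE hfint, hf1]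
  have hEc : ∫ x in Eᶜ, f x ∂m = 1 - t := by linarith
  have hkey : ∫ x, f x * (g' x).re ∂m ≤ t + (1 - δ) * (1 - t) := by
    rw [← integral_add_compl hE hfre_int]
    have hA : ∫ x in E, f x * (g' x).re ∂m ≤ t := by
      apply setIntegral_mono_ae hfre_int.integrableOn hfint.integrableOn
      filter_upwards [hg'le] with x hx
      have : (g' x).re ≤ 1 := le_trans (le_abs_self _) (le_trans (Complex.abs_re_le_norm _) hx)
      nlinarith [hf0 x]
    have hB : ∫ x in Eᶜ, f x * (g' x).re ∂m ≤ (1 - δ) * (1 - t) := by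
      have : ∫ x in Eᶜ, f x * (g' x).re ∂m ≤ ∫ x in Eᶜ, (1 - δ) * f x ∂m := by
        apply setIntegral_mono_on hfre_int.integrableOn
          (hfint.integrableOn.const_mul _) hE.compl
        intro x hx
        have hx' : (g' x).re ≤ 1 - δ := by
          simpa [hEdef, not_lt] using hx
        nlinarith [hf0 x]
      rw [integral_const_mul] at this
      rw [hEc] at this
      exact this
    linarith
  -- conclude 1 - t < ε/4
  have hpair' : 1 - ε ^ 3 / 16 < t + (1 - δ) * (1 - t) := by
    rw [h1] at hpair; linarith
  have htle : t ≤ 1 := by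
    rw [← hf1]
    exact setIntegral_le_integral hfint (Filter.Eventually.of_forall hf0)
  have htgt : 1 - t < ε / 4 := by
    have h4 : δ * (1 - t) < ε ^ 3 / 16 := by nlinarith
    rw [hδ] at h4
    nlinarith
  have ht0 : 0 < t := by nlinarith
  -- the new simple function
  set f₁ : SimpleFunc Ω ℝ := SimpleFunc.piecewise E hE (t⁻¹ • f) 0 with hf₁def
  have hf₁app : ∀ x, f₁ x = if x ∈ E then t⁻¹ * f x else 0 := by
    intro x
    simp [hf₁def, SimpleFunc.piecewise_apply, SimpleFunc.smul_apply, smul_eq_mul]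
  have hf₁0 : ∀ x, 0 ≤ f₁ x := by
    intro x; rw [hf₁app]
    split
    · exact mul_nonneg (inv_nonneg.mpr ht0.le) (hf0 x)
    · exact le_refl 0
  have hf₁coe : ⇑f₁ = E.indicator (fun x => t⁻¹ * f x) := by
    funext x
    rw [hf₁app, Set.indicator_apply]
  have hf₁int : Integrable f₁ m := f₁.integrable_of_isFiniteMeasure
  have hf₁1 : ∫ x, f₁ x ∂m = 1 := by
    rw [hf₁coe, integral_indicator hE, integral_const_mul, ← ht, inv_mul_cancel₀ ht0.ne']
  set g₁ : Ω → ℂ := fun x => if f₁ x ≠ 0 then 1 else g x with hg₁def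
  have hsupp : ∀ x, f₁ x ≠ 0 → (x ∈ E ∧ f x ≠ 0) := by
    intro x hx
    rw [hf₁app] at hx
    by_cases hxE : x ∈ E
    · refine ⟨hxE, ?_⟩
      intro h0
      simp [hxE, h0] at hx
    · simp [hxE] at hx
  refine ⟨f₁, g₁, hf₁0, hf₁1, fun x => rfl, ?_, ?_, ?_, ?_, fun x hx => (hsupp x hx).2⟩
  · -- eLpNorm g₁ = 1
    have hub : eLpNorm g₁ ⊤ m ≤ 1 := by
      rw [eLpNorm_exponent_top]
      have := eLpNormEssSup_le_of_ae_bound (μ := m) (f := g₁) (C := 1) ?_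
      · simpa using this
      · filter_upwards [hgle] with x hx
        rw [hg₁def]
        by_cases h0 : f₁ x = 0
        · simpa [h0] using hx
        · simp [h0]
    refine le_antisymm hub ?_
    by_contra hlt
    push_neg at hlt
    rw [eLpNorm_exponent_top] at hlt
    have hae : ∀ᵐ x ∂m, (‖g₁ x‖₊ : ℝ≥0∞) < 1 := ae_lt_of_essSup_lt hlt
    have hzero : ∀ᵐ x ∂m, f₁ x = 0 := by
      filter_upwards [hae] with x hx
      by_contra h0
      have : g₁ x = 1 := by simp [hg₁def, h0]
      rw [this] at hx
      simp at hx
    have : ∫ x, f₁ x ∂m = 0 := integral_eq_zero_of_ae hzero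
    rw [hf₁1] at this
    exact one_ne_zero this
  · -- pairing = 1
    have : (fun x => (f₁ x : ℂ) * g₁ x) = fun x => ((f₁ x : ℝ) : ℂ) := by
      funext x
      by_cases h0 : f₁ x = 0
      · simp [hg₁def, h0]
      · simp [hg₁def, h0]
    rw [this]
    have hoc : ∫ x, ((f₁ x : ℝ) : ℂ) ∂m = ((∫ x, f₁ x ∂m : ℝ) : ℂ) := integral_ofReal
    rw [hoc, hf₁1]
    norm_num
  · -- ∫ |f - f₁| < ε
    have habs_int : Integrable (fun x => |f x - f₁ x|) m := (hfint.sub hf₁int).abs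
    have hsplit := integral_add_compl hE habs_int
    have hA : ∫ x in E, |f x - f₁ x| ∂m = (t⁻¹ - 1) * t := by
      rw [setIntegral_congr_fun hE (g := fun x => (t⁻¹ - 1) * f x) ?_, integral_const_mul]
      intro x hx
      show |f x - f₁ x| = (t⁻¹ - 1) * f x
      rw [hf₁app, if_pos hx]
      have h1t : 1 ≤ t⁻¹ := by
        nlinarith [mul_inv_cancel₀ ht0.ne', inv_nonneg.mpr ht0.le]
      have : f x - t⁻¹ * f x ≤ 0 := by nlinarith [hf0 x]
      rw [abs_of_nonpos this]; ring
    have hB : ∫ x in Eᶜ, |f x - f₁ x| ∂m = 1 - t := by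
      rw [setIntegral_congr_fun hE.compl (g := fun x => f x) ?_, hEc]
      intro x hx
      show |f x - f₁ x| = f x
      rw [hf₁app, if_neg hx, sub_zero, abs_of_nonneg (hf0 x)]
    rw [← hsplit, hA, hB]
    have : (t⁻¹ - 1) * t = 1 - t := by field_simp
    rw [this]
    linarith
  · -- eLpNorm (g - g₁) < sqrt ε
    set C : ℝ := Real.sqrt (ε ^ 2 / 2) with hC
    have hbound : ∀ᵐ x ∂m, ‖(g - g₁) x‖ ≤ C := by
      filter_upwards [hgg', hg'le] with x hx hx'
      by_cases h0 : f₁ x = 0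
      · simp [hg₁def, h0, hC]
        positivity
      · have hxE : x ∈ E := (hsupp x h0).1
        have hre : 1 - δ < (g' x).re := hxE
        have hg₁x : g₁ x = 1 := by simp [hg₁def, h0]
        have : (g - g₁) x = g' x - 1 := by simp [hg₁x, hx]
        rw [this]
        have hn : ‖g' x - 1‖ ^ 2 = ((g' x).re - 1) ^ 2 + (g' x).im ^ 2 := by
          rw [Complex.sq_norm, Complex.normSq_apply]
          simp only [Complex.sub_re, Complex.sub_im, Complex.one_re, Complex.one_im]
          ring
        have hsq : (g' x).re ^ 2 + (g' x).im ^ 2 ≤ 1 := by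
          have h2 : Complex.normSq (g' x) ≤ 1 := by
            rw [← Complex.sq_norm]
            have habs : ‖g' x‖ ≤ 1 := hx'
            nlinarith [norm_nonneg (g' x)]
          rw [Complex.normSq_apply] at h2
          nlinarith
        rw [hC]
        rw [show ‖g' x - 1‖ = Real.sqrt (‖g' x - 1‖ ^ 2) by
          rw [Real.sqrt_sq (norm_nonneg _)]]
        apply Real.sqrt_le_sqrt
        rw [hn]
        nlinarith [hre, hsq]
    have hle : eLpNorm (g - g₁) ⊤ m ≤ ENNReal.ofReal C := by
      rw [eLpNorm_exponent_top]
      exact eLpNormEssSup_le_of_ae_bound hbound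
    refine lt_of_le_of_lt hle ?_
    rw [ENNReal.ofReal_lt_ofReal_iff (Real.sqrt_pos.mpr hε)]
    rw [hC]
    apply Real.sqrt_lt_sqrt (by positivity)
    nlinarith
end

section
/- Let $Y$ and $Z$ be Banach spaces and $X = Y \oplus_1 Z$. Let $S \in \mathcal{L}(Y)$ with $v(S) = 1$ attained at $(\tilde{y}_0, \tilde{y}_0^*) \in \Pi(Y)$, and let $T_0 \in \mathcal{L}(X)$ with $\|T_0\| \le 1$. Define $T \in \mathcal{L}(X)$ by $T(y, z) = (Sy, 0) + T_0(0, z)$. Then $\|T\| = 1$, $v(T) = 1$, and for $x = (\tilde{y}_0, 0)$ and any $z^* \in B_{Z^*}$ the pair $(x, x^*)$ with $x^* = (\tilde{y}_0^*, z^*)$ belongs to $\Pi(X)$ and satisfies $|x^*(Tx)| = |\tilde{y}_0^*(S\tilde{y}_0)| = 1 = v(T)$, i.e., $T$ attains its numerical radius at $(x, x^*)$. -/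
open NormedSpace

lemma norm_withLp_one {Y Z : Type*} [NormedAddCommGroup Y] [NormedAddCommGroup Z]
    (x : WithLp 1 (Y × Z)) : ‖x‖ = ‖x.fst‖ + ‖x.snd‖ := by
  rw [WithLp.prod_norm_eq_add (by norm_num)]
  norm_num

/-- Final step in the proof of Theorem 4.1: let `X = Y ⊕₁ Z`, let `S ∈ L(Y)` with
`‖S‖ = v(S) = 1` attained at `(ỹ₀, ỹ₀*) ∈ Π(Y)` (with `‖Sỹ₀‖ = 1`), let `T₀ ∈ L(X)` with
`‖T₀‖ ≤ 1`, and define `T(y,z) = (Sy, 0) + T₀(0,z)`. Then `‖T‖ = 1`, `v(T) = 1` and, for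
`x = (ỹ₀, 0)` and `x* = (ỹ₀*, z*)` with `z* ∈ B_{Z*}`, the pair `(x, x*)` lies in `Π(X)`
and `|x*(Tx)| = |ỹ₀*(Sỹ₀)| = 1 = v(T)`, i.e. `T` attains its numerical radius there. -/
theorem stmt17 (Y Z : Type*) [NormedAddCommGroup Y] [NormedSpace ℝ Y] [CompleteSpace Y]
    [NormedAddCommGroup Z] [NormedSpace ℝ Z] [CompleteSpace Z]
    (S : Y →L[ℝ] Y) (hSnorm : ‖S‖ = 1) (hvS : nuRad S = 1)
    (y₀ : Y) (y₀star : StrongDual ℝ Y)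
    (hy₀ : ‖y₀‖ = 1) (hy₀star : ‖y₀star‖ = 1) (hpair : y₀star y₀ = 1)
    (hSy₀ : ‖S y₀‖ = 1) (hatt : |y₀star (S y₀)| = 1)
    (T₀ T : WithLp 1 (Y × Z) →L[ℝ] WithLp 1 (Y × Z)) (hT₀ : ‖T₀‖ ≤ 1)
    (hT : ∀ (y : Y) (z : Z),
      T ((WithLp.equiv 1 (Y × Z)).symm (y, z)) =
        (WithLp.equiv 1 (Y × Z)).symm (S y, 0) + T₀ ((WithLp.equiv 1 (Y × Z)).symm (0, z))) :
    ‖T‖ = 1 ∧ nuRad T = 1 ∧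
    ∀ (zstar : StrongDual ℝ Z), ‖zstar‖ ≤ 1 →
      ∀ xstar : StrongDual ℝ (WithLp 1 (Y × Z)),
        (∀ (y : Y) (z : Z),
          xstar ((WithLp.equiv 1 (Y × Z)).symm (y, z)) = y₀star y + zstar z) →
        (‖(WithLp.equiv 1 (Y × Z)).symm ((y₀, 0) : Y × Z)‖ = 1 ∧ ‖xstar‖ = 1 ∧
          xstar ((WithLp.equiv 1 (Y × Z)).symm ((y₀, 0) : Y × Z)) = 1 ∧
          |xstar (T ((WithLp.equiv 1 (Y × Z)).symm ((y₀, 0) : Y × Z)))| = 1 ∧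
          |xstar (T ((WithLp.equiv 1 (Y × Z)).symm ((y₀, 0) : Y × Z)))| = nuRad T) := by
  set e := (WithLp.equiv 1 (Y × Z)).symm with he
  -- the distinguished point
  set x₀ : WithLp 1 (Y × Z) := e (y₀, 0) with hx₀
  have hnormx₀ : ‖x₀‖ = 1 := by
    rw [norm_withLp_one]
    simp [hx₀, he, hy₀]
  -- T x₀ = e (S y₀, 0)
  have hTx₀ : T x₀ = e (S y₀, 0) := by
    rw [hx₀, he, hT y₀ 0]
    have : (WithLp.equiv 1 (Y × Z)).symm ((0 : Y), (0 : Z)) = 0 := by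
      simp [Prod.ext_iff]
    rw [this]
    simp
    rfl
  -- ‖T‖ ≤ 1
  have hTnorm_le : ‖T‖ ≤ 1 := by
    refine ContinuousLinearMap.opNorm_le_bound T zero_le_one (fun x => ?_)
    have hx : x = e (x.fst, x.snd) := rfl
    rw [hx, hT x.fst x.snd]
    calc ‖e (S x.fst, 0) + T₀ (e (0, x.snd))‖
        ≤ ‖e (S x.fst, 0)‖ + ‖T₀ (e (0, x.snd))‖ := norm_add_le _ _
      _ ≤ ‖S x.fst‖ + ‖T₀‖ * ‖e (0, x.snd)‖ := by
          gcongr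
          · exact le_of_eq (WithLp.norm_toLp_fst 1 Y Z _)
          · exact T₀.le_opNorm _
      _ ≤ ‖x.fst‖ + 1 * ‖x.snd‖ := by
          gcongr
          · calc ‖S x.fst‖ ≤ ‖S‖ * ‖x.fst‖ := S.le_opNorm _
              _ = ‖x.fst‖ := by rw [hSnorm, one_mul]
          · exact le_of_eq (WithLp.norm_toLp_snd 1 Y Z _)
      _ = 1 * ‖x‖ := by rw [one_mul, one_mul, norm_withLp_one]
  have hTnorm_ge : (1:ℝ) ≤ ‖T‖ := by
    have := T.le_opNorm x₀
    rw [hTx₀, hnormx₀, mul_one] at this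
    have h2 : ‖e (S y₀, (0:Z))‖ = 1 := by
      rw [norm_withLp_one]; simp [he, hSy₀]
    linarith [h2 ▸ this]
  have hTnorm : ‖T‖ = 1 := le_antisymm hTnorm_le hTnorm_ge
  -- the canonical functional (y,z) ↦ y₀star y
  set f₀ : StrongDual ℝ (WithLp 1 (Y × Z)) :=
    y₀star.comp ((ContinuousLinearMap.fst ℝ Y Z).comp
      (WithLp.prodContinuousLinearEquiv 1 ℝ Y Z).toContinuousLinearMap) with hf₀
  have hf₀apply : ∀ x : WithLp 1 (Y × Z), f₀ x = y₀star x.fst := fun x => rfl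
  -- general claim: any functional acting as (y,z) ↦ y₀star y + zstar z has the properties
  have main : ∀ (zstar : StrongDual ℝ Z), ‖zstar‖ ≤ 1 →
      ∀ xstar : StrongDual ℝ (WithLp 1 (Y × Z)),
        (∀ (y : Y) (z : Z), xstar (e (y, z)) = y₀star y + zstar z) →
        ‖xstar‖ = 1 ∧ xstar x₀ = 1 ∧ |xstar (T x₀)| = 1 := by
    intro zstar hzstar xstar hxstar
    have happ : ∀ x : WithLp 1 (Y × Z), xstar x = y₀star x.fst + zstar x.snd := by
      intro x; exact hxstar x.fst x.snd
    have hx₀val : xstar x₀ = 1 := by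
      rw [hx₀, hxstar y₀ 0]; simp [hpair]
    have hxstar_le : ‖xstar‖ ≤ 1 := by
      refine ContinuousLinearMap.opNorm_le_bound xstar zero_le_one (fun x => ?_)
      rw [happ x, one_mul, norm_withLp_one]
      calc |y₀star x.fst + zstar x.snd| ≤ |y₀star x.fst| + |zstar x.snd| := abs_add_le _ _
        _ ≤ ‖y₀star‖ * ‖x.fst‖ + ‖zstar‖ * ‖x.snd‖ := by
            gcongr <;> [exact y₀star.le_opNorm _; exact zstar.le_opNorm _]
        _ ≤ 1 * ‖x.fst‖ + 1 * ‖x.snd‖ := by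
            gcongr; rw [hy₀star]
        _ = ‖x.fst‖ + ‖x.snd‖ := by ring
    have hxstar_ge : (1:ℝ) ≤ ‖xstar‖ := by
      have := xstar.le_opNorm x₀
      rw [hnormx₀, mul_one, hx₀val] at this
      calc (1:ℝ) = |(1:ℝ)| := by norm_num
        _ ≤ ‖xstar‖ := by rw [← hx₀val] at *; exact this
    have hTx₀val : |xstar (T x₀)| = 1 := by
      rw [hTx₀, hxstar (S y₀) 0]
      simpa using hatt
    exact ⟨le_antisymm hxstar_le hxstar_ge, hx₀val, hTx₀val⟩
  -- f₀ satisfies the hypothesis with zstar = 0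
  have hf₀prop : ∀ (y : Y) (z : Z), f₀ (e (y, z)) = y₀star y + (0 : StrongDual ℝ Z) z := by
    intro y z
    rw [hf₀apply, he, WithLp.equiv_symm_apply, WithLp.toLp_fst]
    simp
  obtain ⟨hf₀norm, hf₀x₀, hf₀Tx₀⟩ := main 0 (by simp) f₀ hf₀prop
  -- nuRad T = 1
  have hmem : (1:ℝ) ∈ {r : ℝ | ∃ (x : WithLp 1 (Y × Z)) (f : StrongDual ℝ (WithLp 1 (Y × Z))),
      ‖x‖ = 1 ∧ ‖f‖ = 1 ∧ f x = 1 ∧ r = |f (T x)|} :=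
    ⟨x₀, f₀, hnormx₀, hf₀norm, hf₀x₀, hf₀Tx₀.symm⟩
  have hbdd : ∀ r ∈ {r : ℝ | ∃ (x : WithLp 1 (Y × Z)) (f : StrongDual ℝ (WithLp 1 (Y × Z))),
      ‖x‖ = 1 ∧ ‖f‖ = 1 ∧ f x = 1 ∧ r = |f (T x)|}, r ≤ 1 := by
    rintro r ⟨x, f, hx, hf, -, rfl⟩
    calc |f (T x)| ≤ ‖f‖ * ‖T x‖ := f.le_opNorm _
      _ ≤ 1 * (‖T‖ * ‖x‖) := by rw [hf, one_mul, one_mul]; exact T.le_opNorm x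
      _ = 1 := by rw [hTnorm, hx]; ring
  have hnuRad : nuRad T = 1 := by
    unfold nuRad
    exact le_antisymm (csSup_le ⟨1, hmem⟩ hbdd)
      (le_csSup ⟨1, hbdd⟩ hmem)
  refine ⟨hTnorm, hnuRad, fun zstar hzstar xstar hxstar => ?_⟩
  obtain ⟨h1, h2, h3⟩ := main zstar hzstar xstar hxstar
  exact ⟨hnormx₀, h1, h2, h3, by rw [h3, hnuRad]⟩
end
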